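/- arXiv:2411.16338 — 2 statements merged into one kernel-verified Lean document; each statement's English description precedes it below -/
import Mathlib

section
/- Let L be a linear order that is scattered (there is no order embedding of ℚ into L) and indecomposable (for every partition of L into an initial segment I and its complement F, L order-embeds into I or L order-embeds into F). Then L is indecomposable to the right (for every such partition with F nonempty, L order-embeds into F) or L is indecomposable to the left (for every such partition with I nonempty, L order-embeds into I). -/
/-!
Suppose both conclusions fail: some `a` has `L ↪ [a, ∞)` impossible and some `b` has
`L ↪ (-∞, b]` impossible. Indecomposability, applied to the cut at a point, then shows that
`L` embeds in `[b, a]`, and that some `m` has `L` embedding both below and above it.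
The relation "`L` embeds in `[x, y]`" is cotransitive (cut `[x, z]` at `y`) and dense (push `m`
into `[x, y]`), so the points of `L` modulo "`L` embeds in neither `[x, y]` nor `[y, x]`" form a
nontrivial dense linear order, into which `ℚ` embeds; this contradicts scatteredness.
-/

open Set

section Cotransitive

variable {α : Type*} [LinearOrder α] {W : α → α → Prop}

theorem nonempty_rat_orderEmbedding_of_dense_cotransitive
    (lt_of_rel : ∀ {x y}, W x y → x < y)
    (cotrans : ∀ {x z} (y : α), W x z → W x y ∨ W y z)
    (dense : ∀ {x z}, W x z → ∃ y, W x y ∧ W y z)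
    {a b : α} (hab : W a b) : Nonempty (ℚ ↪o α) := by
  classical
  let s : Setoid α :=
    { r := fun x y => ¬W x y ∧ ¬W y x
      iseqv :=
        { refl := fun x => ⟨fun h => (lt_of_rel h).false, fun h => (lt_of_rel h).false⟩
          symm := fun ⟨h₁, h₂⟩ => ⟨h₂, h₁⟩
          trans := fun {_ y _} ⟨h₁, h₂⟩ ⟨h₃, h₄⟩ =>
            ⟨fun h => (cotrans y h).elim h₁ h₃, fun h => (cotrans y h).elim h₄ h₂⟩ } }
  -- convex classes make `Quotient s` a linear order, `Quotient.instLinearOrder`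
  have : ∀ q : Quotient s, OrdConnected (Quotient.mk s ⁻¹' {q}) := by
    refine Quotient.ind fun w =>
      ⟨fun x (hx : ⟦x⟧ = ⟦w⟧) z (hz : ⟦z⟧ = ⟦w⟧) y ⟨hxy, hyz⟩ => ?_⟩
    obtain ⟨hxw, -⟩ := Quotient.exact hx
    obtain ⟨-, hwz⟩ := Quotient.exact hz
    refine Quotient.sound ⟨fun h => ?_, fun h => ?_⟩
    · exact (cotrans x h).elim (fun h => (lt_of_rel h).not_ge hxy) hxw
    · exact (cotrans z h).elim hwz fun h => (lt_of_rel h).not_ge hyz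
  have : DenselyOrdered (Quotient s) := by
    refine ⟨Quotient.ind₂ fun x z hxz => ?_⟩
    obtain ⟨hlt, hxz⟩ := Quotient.mk_lt_mk.1 hxz
    have hW : W x z := by
      by_contra hW
      exact hxz ⟨hW, fun h => (lt_of_rel h).not_gt hlt⟩
    obtain ⟨y, hxy, hyz⟩ := dense hW
    exact ⟨⟦y⟧, Quotient.mk_lt_mk.2 ⟨lt_of_rel hxy, fun h => h.1 hxy⟩,
      Quotient.mk_lt_mk.2 ⟨lt_of_rel hyz, fun h => h.1 hyz⟩⟩
  have : Nontrivial (Quotient s) := ⟨⟦a⟧, ⟦b⟧, fun h => (Quotient.exact h).1 hab⟩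
  obtain ⟨f⟩ := Order.embedding_from_countable_to_dense ℚ (Quotient s)
  refine ⟨f.trans (OrderEmbedding.ofStrictMono Quotient.out fun p q hpq => ?_)⟩
  rw [← Quotient.out_eq p, ← Quotient.out_eq q] at hpq
  exact Quotient.lt_of_mk_lt_mk hpq

end Cotransitive

section Embeds

variable {L : Type*} [LinearOrder L]

def EmbedsIn (T : Set L) : Prop :=
  ∃ g : L → L, StrictMono g ∧ ∀ x, g x ∈ T

theorem embedsIn_iff_nonempty_orderEmbedding {T : Set L} :
    EmbedsIn T ↔ Nonempty (L ↪o T) := by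
  constructor
  · rintro ⟨g, hg, hT⟩
    exact ⟨OrderEmbedding.ofStrictMono (fun x => ⟨g x, hT x⟩) fun _ _ h => hg h⟩
  · rintro ⟨f⟩
    exact ⟨fun x => f x, fun _ _ h => f.strictMono h, fun x => (f x).2⟩

theorem embedsIn_univ : EmbedsIn (univ : Set L) :=
  ⟨id, strictMono_id, mem_univ⟩

theorem EmbedsIn.of_mapsTo {S T : Set L} (h : EmbedsIn S) {g : L → L} (hg : StrictMono g)
    (hST : MapsTo g S T) : EmbedsIn T := by
  obtain ⟨f, hf, hS⟩ := h
  exact ⟨g ∘ f, hg.comp hf, fun x => hST (hS x)⟩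

theorem EmbedsIn.mono {S T : Set L} (h : EmbedsIn S) (hST : S ⊆ T) : EmbedsIn T :=
  h.of_mapsTo strictMono_id hST

theorem EmbedsIn.lt_of_Icc [Nontrivial L] {x y : L} (h : EmbedsIn (Icc x y)) : x < y := by
  obtain ⟨g, hg, hxy⟩ := h
  obtain ⟨p, q, hpq⟩ := exists_pair_lt L
  exact (hxy p).1.trans_lt ((hg hpq).trans_le (hxy q).2)

theorem EmbedsIn.exists_Icc_Icc {x y m : L} (h : EmbedsIn (Icc x y))
    (hle : EmbedsIn (Iic m)) (hge : EmbedsIn (Ici m)) :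
    ∃ z, EmbedsIn (Icc x z) ∧ EmbedsIn (Icc z y) := by
  obtain ⟨g, hg, hxy⟩ := h
  have below : MapsTo g (Iic m) (Icc x (g m)) := fun t ht => ⟨(hxy t).1, hg.monotone ht⟩
  have above : MapsTo g (Ici m) (Icc (g m) y) := fun t ht => ⟨hg.monotone ht, (hxy t).2⟩
  exact ⟨g m, hle.of_mapsTo hg below, hge.of_mapsTo hg above⟩

def IsIndecomposable (L : Type*) [LinearOrder L] : Prop :=
  ∀ I : Set L, IsLowerSet I → EmbedsIn I ∨ EmbedsIn Iᶜ

variable (hL : IsIndecomposable L)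
include hL

theorem EmbedsIn.inter_Iic_or_inter_Ioi {T : Set L} (h : EmbedsIn T) (c : L) :
    EmbedsIn (T ∩ Iic c) ∨ EmbedsIn (T ∩ Ioi c) := by
  obtain ⟨g, hg, hT⟩ := h
  have hlow : IsLowerSet {x | g x ≤ c} := fun _ _ hxy hx => (hg.monotone hxy).trans hx
  rcases hL _ hlow with h | h
  · exact .inl <| h.of_mapsTo hg fun x hx => ⟨hT x, hx⟩
  · exact .inr <| h.of_mapsTo hg fun x hx => ⟨hT x, not_le.1 hx⟩

theorem EmbedsIn.Icc_or_Icc {x z : L} (h : EmbedsIn (Icc x z)) (y : L) :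
    EmbedsIn (Icc x y) ∨ EmbedsIn (Icc y z) :=
  (h.inter_Iic_or_inter_Ioi hL y).imp
    (fun h => h.mono fun _ ht => ⟨ht.1.1, ht.2⟩)
    (fun h => h.mono fun _ ht => ⟨ht.2.le, ht.1.2⟩)

theorem embedsIn_Icc_of_not_embedsIn_Ici_of_not_embedsIn_Iic {a b : L}
    (ha : ¬EmbedsIn (Ici a)) (hb : ¬EmbedsIn (Iic b)) : EmbedsIn (Icc b a) := by
  have hIic : EmbedsIn (Iic a) := by
    rcases embedsIn_univ.inter_Iic_or_inter_Ioi hL a with h | h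
    · exact h.mono inter_subset_right
    · exact absurd (h.mono fun _ ht => ht.2.le) ha
  rcases hIic.inter_Iic_or_inter_Ioi hL b with h | h
  · exact absurd (h.mono inter_subset_right) hb
  · exact h.mono fun _ ht => ⟨ht.2.le, ht.1⟩

theorem exists_embedsIn_Iic_and_embedsIn_Ici {a b : L}
    (ha : EmbedsIn (Iic a)) (hb : EmbedsIn (Ici b)) :
    ∃ m : L, EmbedsIn (Iic m) ∧ EmbedsIn (Ici m) := by
  set left : Set L := {x : L | EmbedsIn (Iic x)}
  set right : Set L := {x : L | EmbedsIn (Ici x)}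
  have left_mapsTo {g : L → L} (hg : StrictMono g) : MapsTo g left left :=
    fun x (hx : EmbedsIn (Iic x)) => hx.of_mapsTo hg hg.monotone.mapsTo_Iic
  have right_mapsTo {g : L → L} (hg : StrictMono g) : MapsTo g right right :=
    fun x (hx : EmbedsIn (Ici x)) => hx.of_mapsTo hg hg.monotone.mapsTo_Ici
  have hleft : EmbedsIn left := by
    have hupper : IsUpperSet left :=
      fun _ _ hxy (hx : EmbedsIn (Iic _)) => hx.mono (Iic_subset_Iic.2 hxy)
    rcases hL _ hupper.compl with ⟨g, hg, hout⟩ | h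
    · exact absurd (left_mapsTo hg ha) (hout a)
    · rwa [compl_compl] at h
  have hright : EmbedsIn right := by
    have hlower : IsLowerSet right :=
      fun _ _ hxy (hx : EmbedsIn (Ici _)) => hx.mono (Ici_subset_Ici.2 hxy)
    rcases hL _ hlower with h | ⟨g, hg, hout⟩
    · exact h
    · exact absurd (right_mapsTo hg hb) (hout b)
  obtain ⟨u, hu, hul⟩ := hleft
  obtain ⟨v, hv, hvr⟩ := hright
  exact ⟨v (u a), left_mapsTo hv (hul a), hvr (u a)⟩

end Embeds

theorem indec {L : Type*} [LinearOrder L]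
    (hscat : IsEmpty (ℚ ↪o L))
    (hindec : ∀ I : Set L, IsLowerSet I →
      Nonempty (L ↪o I) ∨ Nonempty (L ↪o ↥(Iᶜ))) :
    (∀ I : Set L, IsLowerSet I → (Iᶜ).Nonempty → Nonempty (L ↪o ↥(Iᶜ))) ∨
    (∀ I : Set L, IsLowerSet I → I.Nonempty → Nonempty (L ↪o I)) := by
  have hL : IsIndecomposable L := by
    simpa only [IsIndecomposable, embedsIn_iff_nonempty_orderEmbedding] using hindec
  simp only [← embedsIn_iff_nonempty_orderEmbedding]
  by_contra! ⟨⟨I, hI, ⟨a, ha⟩, hIa⟩, J, hJ, ⟨b, hb⟩, hJb⟩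
  have hIci : ¬EmbedsIn (Ici a) := fun h => hIa (h.mono fun _ hx hxI => ha (hI hx hxI))
  have hIic : ¬EmbedsIn (Iic b) := fun h => hJb (h.mono fun _ hx => hJ hx hb)
  have : Nontrivial L := not_subsingleton_iff_nontrivial.1 fun _ =>
    hIci ⟨fun _ => a, Subsingleton.strictMono _, fun _ => le_rfl⟩
  have hba := embedsIn_Icc_of_not_embedsIn_Ici_of_not_embedsIn_Iic hL hIci hIic
  obtain ⟨m, hle, hge⟩ := exists_embedsIn_Iic_and_embedsIn_Ici hL
    (hba.mono Icc_subset_Iic_self) (hba.mono Icc_subset_Ici_self)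
  obtain ⟨e⟩ :=
    nonempty_rat_orderEmbedding_of_dense_cotransitive (W := fun x y => EmbedsIn (Icc x y))
      EmbedsIn.lt_of_Icc (fun y h => h.Icc_or_Icc hL y) (fun h => h.exists_Icc_Icc hle hge) hba
  exact hscat.false e
end

section
/- Let α be a type and Z : (n : ℕ) → (Fin (n+1) → α) a family of finite sequences, with Z 0 0 = a for a fixed a : α. Suppose that for every n, the set of finite sequences of length n+1 arising as restrictions of some Z m (m ≥ n) to their first n+1 entries is finite. Then there exists f : ℕ → ℕ such that the sequence W : ℕ → α defined by W n = Z (f n) n satisfies: for every n, the first n+1 entries of Z (f (n+1)) agree with W 0, ..., W n. -/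
/-!
Pad each `Z m` with `none` beyond its length. The padded sequences then lie in a product of
finite sets of `Option α`, compact for the discrete topology by Tychonoff, so they have a cluster
point `w`. Every initial segment of `w` is an initial segment of `Z m` for infinitely many `m`,
and choosing such an `m ≥ n` for each `n` gives `f`.
-/

open Filter Topology

theorem exists_frequently_forall_lt_eq_of_finite_range {β : Type*} (x : ℕ → ℕ → β)
    (hx : ∀ i, (Set.range fun m => x m i).Finite) :
    ∃ w : ℕ → β, ∀ n, ∃ᶠ m in atTop, ∀ i < n, x m i = w i := by
  let _ : TopologicalSpace β := ⊥
  have : DiscreteTopology β := ⟨rfl⟩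
  have hK : IsCompact (Set.univ.pi fun i => Set.range fun m => x m i) :=
    isCompact_univ_pi fun i => (hx i).isCompact
  obtain ⟨w, -, hw⟩ := hK.exists_mapClusterPt (f := atTop) (u := x) (by simp)
  refine ⟨w, fun n => hw.frequently (p := fun y => ∀ i < n, y i = w i) ?_⟩
  have hcyl : (Set.Iio n).pi (fun i => {w i}) ∈ 𝓝 w :=
    set_pi_mem_nhds (Set.finite_Iio n) fun i _ => mem_nhds_discrete.2 rfl
  filter_upwards [hcyl] with y hy i hi using hy i hi

section Padding

variable {α : Type*} (Z : (n : ℕ) → Fin (n + 1) → α)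

def paddedSeq (m i : ℕ) : Option α :=
  if h : i ≤ m then some (Z m ⟨i, Nat.lt_succ_of_le h⟩) else none

theorem paddedSeq_of_le {m i : ℕ} (h : i ≤ m) :
    paddedSeq Z m i = some (Z m ⟨i, Nat.lt_succ_of_le h⟩) :=
  dif_pos h

theorem finite_range_paddedSeq (i : ℕ)
    (hfin : {g : Fin (i + 1) → α | ∃ m, ∃ h : i ≤ m, ∀ j : Fin (i + 1),
        g j = Z m ⟨j.val, j.isLt.trans_le (Nat.succ_le_succ h)⟩}.Finite) :
    (Set.range fun m => paddedSeq Z m i).Finite := by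
  refine ((hfin.image fun g => some (g (Fin.last i))).insert none).subset ?_
  rintro _ ⟨m, rfl⟩
  by_cases h : i ≤ m
  · refine Or.inr ⟨fun j => Z m ⟨j, by omega⟩, ⟨m, h, fun j => rfl⟩, ?_⟩
    simp [paddedSeq_of_le Z h]
  · simp [paddedSeq, h]

end Padding

theorem coherent_subsequence {α : Type*}
    (Z : (n : ℕ) → Fin (n + 1) → α)
    (hfin : ∀ n : ℕ,
      {g : Fin (n + 1) → α | ∃ m, ∃ h : n ≤ m, ∀ i : Fin (n + 1),
        g i = Z m ⟨i.val, by have := i.isLt; omega⟩}.Finite) :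
    ∃ f : ℕ → ℕ, ∃ hf : ∀ n, n ≤ f n,
      ∀ n : ℕ, ∀ i : Fin (n + 1),
        Z (f (n + 1)) ⟨i.val, by have := i.isLt; have := hf (n + 1); omega⟩ =
        Z (f i.val) ⟨i.val, by have := hf i.val; omega⟩ := by
  obtain ⟨w, hw⟩ := exists_frequently_forall_lt_eq_of_finite_range (paddedSeq Z)
    fun i => finite_range_paddedSeq Z i (hfin i)
  have hlarge : ∀ n, ∃ m, n ≤ m ∧ ∀ i ≤ n, paddedSeq Z m i = w i := fun n =>
    (((hw (n + 1)).and_eventually (eventually_ge_atTop n)).exists).imp fun m hm =>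
      ⟨hm.2, fun i hi => hm.1 i (Nat.lt_succ_of_le hi)⟩
  choose f hf hfw using hlarge
  refine ⟨f, hf, fun n i => Option.some_injective α ?_⟩
  calc some (Z (f (n + 1)) ⟨i, _⟩)
      = paddedSeq Z (f (n + 1)) i := (paddedSeq_of_le Z (by have := hf (n + 1); omega)).symm
    _ = w i := hfw _ _ (by omega)
    _ = paddedSeq Z (f i) i := (hfw _ _ le_rfl).symm
    _ = some (Z (f i) ⟨i, _⟩) := paddedSeq_of_le Z (hf i)
end
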